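/- Let v₀, v ∈ ℂ be nonzero and let ε > 0 satisfy |v₀ − v| < ε < |v₀|. Then the angle θ between v₀ and v (viewed as vectors in the real inner product space ℂ) satisfies tan θ < ε / √(|v₀|² − ε²). In particular θ < π/2. -/

import Mathlib

/-!
The distance from `v₀` to the line through `v` is `‖v₀‖ sin θ`, so `sin θ < ε / ‖v₀‖`; and
`⟪v₀, v⟫ = ‖v₀‖² - ⟪v₀, v₀ - v⟫ > 0`, so `θ` is acute. On `[0, π/2)` the tangent is an increasing
function of the sine, and `ε / √(‖v₀‖² - ε²)` is its value at `sin θ = ε / ‖v₀‖`.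
-/

open Real InnerProductGeometry
open scoped RealInnerProductSpace

namespace InnerProductGeometry

variable {V : Type*} [NormedAddCommGroup V] [InnerProductSpace ℝ V]

theorem sin_angle_mul_norm_le_norm_sub (x y : V) : sin (angle x y) * ‖x‖ ≤ ‖x - y‖ := by
  rcases eq_or_ne y 0 with rfl | hy
  · simp
  have hy' : 0 < ‖y‖ := norm_pos_iff.mpr hy
  refine le_of_mul_le_mul_right ?_ hy'
  rw [mul_assoc, sin_angle_mul_norm_mul_norm, sqrt_le_left (by positivity)]
  rw [real_inner_self_eq_norm_sq, real_inner_self_eq_norm_sq, mul_pow, norm_sub_sq_real]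
  -- the difference of the two sides is `(‖y‖² - ⟪x, y⟫)²`
  nlinarith [sq_nonneg (‖y‖ ^ 2 - ⟪x, y⟫)]

theorem inner_pos_of_norm_sub_lt_norm {x y : V} (h : ‖x - y‖ < ‖x‖) : 0 < ⟪x, y⟫ := by
  have := norm_sub_sq_real x y
  nlinarith [norm_nonneg (x - y), sq_nonneg ‖y‖]

theorem angle_lt_pi_div_two_of_inner_pos {x y : V} (h : 0 < ⟪x, y⟫) : angle x y < π / 2 := by
  have hx : x ≠ 0 := by rintro rfl; simp at h
  have hy : y ≠ 0 := by rintro rfl; simp at h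
  rw [angle, arccos_lt_pi_div_two]
  exact div_pos h (mul_pos (norm_pos_iff.mpr hx) (norm_pos_iff.mpr hy))

end InnerProductGeometry

theorem Real.tan_lt_div_sqrt_of_sin_mul_lt {θ r ε : ℝ} (hcos : 0 < cos θ) (hε : 0 < ε)
    (hsin : sin θ * r < ε) (hr : ε < r) : tan θ < ε / √(r ^ 2 - ε ^ 2) := by
  have hK : 0 < r ^ 2 - ε ^ 2 := by nlinarith
  rw [tan_eq_sin_div_cos, div_lt_div_iff₀ hcos (sqrt_pos.mpr hK)]
  rcases le_or_gt (sin θ) 0 with hs | hs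
  · nlinarith [sqrt_pos.mpr hK]
  refine lt_of_pow_lt_pow_left₀ 2 (by positivity) ?_
  rw [mul_pow, mul_pow, sq_sqrt hK.le, cos_sq']
  nlinarith [mul_pos hs (hε.trans hr)]

theorem angle_tan_lt_of_close_general (v₀ v : ℂ) (ε : ℝ)
    (h₁ : ‖v₀ - v‖ < ε) (h₂ : ε < ‖v₀‖) :
    angle v₀ v < Real.pi / 2 ∧
      Real.tan (angle v₀ v) < ε / Real.sqrt (‖v₀‖ ^ 2 - ε ^ 2) := by
  have hacute := angle_lt_pi_div_two_of_inner_pos (inner_pos_of_norm_sub_lt_norm (h₁.trans h₂))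
  have hcos : 0 < cos (angle v₀ v) :=
    cos_pos_of_mem_Ioo ⟨by linarith [angle_nonneg v₀ v, pi_pos], hacute⟩
  exact ⟨hacute, tan_lt_div_sqrt_of_sin_mul_lt hcos ((norm_nonneg _).trans_lt h₁)
    ((sin_angle_mul_norm_le_norm_sub v₀ v).trans_lt h₁) h₂⟩

open InnerProductGeometry in
/-- If `v₀, v ∈ ℂ` are nonzero and `|v₀ - v| < ε < |v₀|`, then the angle `θ` between
`v₀` and `v` (as vectors in the real inner product space `ℂ`) satisfies `θ < π/2` and
`tan θ < ε / √(|v₀|² - ε²)`. -/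
theorem angle_tan_lt_of_close (v₀ v : ℂ) (hv₀ : v₀ ≠ 0) (hv : v ≠ 0) (ε : ℝ)
    (h₁ : ‖v₀ - v‖ < ε) (h₂ : ε < ‖v₀‖) :
    angle v₀ v < Real.pi / 2 ∧
      Real.tan (angle v₀ v) < ε / Real.sqrt (‖v₀‖ ^ 2 - ε ^ 2) :=
  angle_tan_lt_of_close_general v₀ v ε h₁ h₂
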